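/- arXiv:2506.05505 — 2 statements merged into one kernel-verified Lean document; each statement's English description precedes it below -/
import Mathlib

section
/- Two-point conditional structure of left-monotone couplings with constant barycenter: Let X ⊂ ℝ be a compact interval, let Z = Z₋ ∪ Z₊ be the union of two compact intervals Z₋ = [z̲₋, z̄₋] and Z₊ = [z̲₊, z̄₊], let σ_X be a non-atomic probability measure on X and σ_Z a probability measure on Z with barycenter y = ∫ z dσ_Z satisfying z̄₋ < y < z̲₊, and let F be the constant function F(x) = y. If π = σ_X ⊗ κ ∈ Π̄(F, σ_X, σ_Z) is left-monotone, then for σ_X-a.e. x the conditional probability κ(x, ·) is supported on exactly two points, κ(x, ·) = α₋(x) δ_{T₋(x)} + α₊(x) δ_{T₊(x)}, where T₋ : X → Z₋ is a decreasing map and T₊ : X → Z₊ is an increasing map. -/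
/-!
For a.e. `x` the conditional `κ x` has barycenter `y` and lives on `Z₋ ∪ Z₊`, so its support
meets both intervals; it also lies in the section `Γₓ` of `Γ = supp π`. Left-monotonicity says
that for `x < x'` no point of `Γₓ'` falls in a gap `(z, w)` spanned by `Γₓ`. Hence the `x` for
which `Γₓ` has two points on one side of `y` and one on the other index pairwise disjoint open
intervals: they form a countable, hence `σX`-null, set. Off it `supp (κ x) = {T₋ x, T₊ x}`, and
the same property of `Γ` makes `T₋` antitone and `T₊` monotone there; bounded monotone maps on a
subset of `ℝ` extend monotonically to all of `ℝ`.
-/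

open MeasureTheory ProbabilityTheory Filter Topology ENNReal

noncomputable section

namespace MOT

/-- Convex order of measures on ℝ. -/
def ConvexOrder (μ ν : Measure ℝ) : Prop :=
  ∀ φ : ℝ → ℝ, ConvexOn ℝ Set.univ φ → ∫ x, φ x ∂μ ≤ ∫ x, φ x ∂ν

/-- The (topological) support of a measure. -/
def msupport {α : Type*} [TopologicalSpace α] [MeasurableSpace α] (μ : Measure α) : Set α :=
  {x | ∀ U : Set α, IsOpen U → x ∈ U → μ U ≠ 0}

/-- `π` is a two-period martingale coupling of `μ` and `ν`. -/
def IsMartCoupling2 (μ ν : Measure ℝ) (π : Measure (ℝ × ℝ)) : Prop :=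
  π.map Prod.snd = ν ∧
  ∃ κ : Kernel ℝ ℝ, IsMarkovKernel κ ∧ π = μ ⊗ₘ κ ∧
    ∀ᵐ x ∂μ, ∫ y, y ∂(κ x) = x

/-- `π` is a three-period martingale coupling of `μ₁, μ₂, μ₃`. -/
def IsMartCoupling3 (μ₁ μ₂ μ₃ : Measure ℝ) (π : Measure (ℝ × ℝ × ℝ)) : Prop :=
  π.map (fun q => q.1) = μ₁ ∧
  π.map (fun q => q.2.1) = μ₂ ∧
  π.map (fun q => q.2.2) = μ₃ ∧
  ∃ (κ₁ : Kernel ℝ ℝ) (κ₂ : Kernel (ℝ × ℝ) ℝ),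
    IsMarkovKernel κ₁ ∧ IsMarkovKernel κ₂ ∧
    π = ((μ₁ ⊗ₘ κ₁) ⊗ₘ κ₂).map (fun q => (q.1.1, q.1.2, q.2)) ∧
    (∀ᵐ x ∂μ₁, ∫ y, y ∂(κ₁ x) = x) ∧
    (∀ᵐ q ∂(μ₁ ⊗ₘ κ₁), ∫ z, z ∂(κ₂ q) = q.2)

/-- Membership in `Π̄(F, σX, σZ)`. -/
def MemPiBar (F : ℝ → ℝ) (σX σZ : Measure ℝ) (π : Measure (ℝ × ℝ)) : Prop :=
  π.map Prod.snd = σZ ∧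
  ∃ κ : Kernel ℝ ℝ, IsMarkovKernel κ ∧ π = σX ⊗ₘ κ ∧
    ∀ᵐ x ∂σX, ∫ z, z ∂(κ x) = F x

/-- Left-monotonicity of a coupling on ℝ × ℝ. -/
def LeftMonotone (π : Measure (ℝ × ℝ)) : Prop :=
  ∀ x x' zm zp z' : ℝ, (x, zm) ∈ msupport π → (x, zp) ∈ msupport π →
    (x', z') ∈ msupport π → zm < zp → x < x' → z' ∉ Set.Ioo zm zp

open Set

theorem msupport_eq_support {α : Type*} [TopologicalSpace α] [MeasurableSpace α]
    (μ : Measure α) : msupport μ = μ.support := by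
  ext x
  simp only [msupport, Measure.support_eq_forall_isOpen, mem_ofPred_eq, pos_iff_ne_zero]
  exact forall_congr' fun U => Imp.swap

section Support

variable {X : Type*} [TopologicalSpace X] [MeasurableSpace X] [HereditarilyLindelofSpace X]
  {μ : Measure X} {a b : X}

theorem eq_smul_dirac_add_smul_dirac_of_support_subset [MeasurableSingletonClass X]
    (hab : a ≠ b) (h : μ.support ⊆ {a, b}) :
    μ = μ {a} • Measure.dirac a + μ {b} • Measure.dirac b :=
  (Measure.ae_eq_or_eq_iff_eq_dirac_add_dirac hab).1 (mem_of_superset Measure.support_mem_ae h)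

theorem measure_singleton_pos_of_support_subset [T1Space X] (ha : a ∈ μ.support)
    (h : μ.support ⊆ {a, b}) (hab : a ≠ b) : 0 < μ {a} := by
  have hcover : {b}ᶜ ⊆ {a} ∪ μ.supportᶜ := fun z hzb => by
    by_cases hz : z ∈ μ.support
    · exact Or.inl ((h hz).resolve_right hzb)
    · exact Or.inr hz
  calc 0 < μ {b}ᶜ := (μ.mem_support_iff_forall a).1 ha _ (isOpen_compl_singleton.mem_nhds hab)
    _ ≤ μ {a} + μ μ.supportᶜ := (measure_mono hcover).trans (measure_union_le _ _)
    _ = μ {a} := by rw [Measure.measure_compl_support, add_zero]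

end Support

theorem toReal_weights_of_eq_smul_dirac_add_smul_dirac {α : Type*} [MeasurableSpace α]
    {ν : Measure α} [IsProbabilityMeasure ν] {a b : α} (ha : 0 < ν {a}) (hb : 0 < ν {b})
    (h : ν = ν {a} • Measure.dirac a + ν {b} • Measure.dirac b) :
    0 < (ν {a}).toReal ∧ 0 < (ν {b}).toReal ∧ (ν {a}).toReal + (ν {b}).toReal = 1 ∧
      ν = ENNReal.ofReal (ν {a}).toReal • Measure.dirac a +
        ENNReal.ofReal (ν {b}).toReal • Measure.dirac b := by
  have hsum : ν {a} + ν {b} = 1 := by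
    simpa using (congrArg (fun μ : Measure α => μ univ) h).symm
  refine ⟨ENNReal.toReal_pos ha.ne' (measure_ne_top _ _),
    ENNReal.toReal_pos hb.ne' (measure_ne_top _ _), ?_, ?_⟩
  · rw [← ENNReal.toReal_add (measure_ne_top _ _) (measure_ne_top _ _), hsum, ENNReal.toReal_one]
  · rwa [ENNReal.ofReal_toReal (measure_ne_top _ _), ENNReal.ofReal_toReal (measure_ne_top _ _)]

theorem measure_pos_of_integral_notMem_Icc {ν : Measure ℝ} [IsProbabilityMeasure ν]
    {a b : ℝ} {t : Set ℝ} (hν : ∀ᵐ z ∂ν, z ∈ Icc a b ∪ t) (h : ∫ z, z ∂ν ∉ Icc a b) :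
    0 < ν t := by
  refine pos_iff_ne_zero.2 fun ht => h ?_
  have hab : ∀ᵐ z ∂ν, z ∈ Icc a b := by
    filter_upwards [hν, measure_eq_zero_iff_ae_notMem.1 ht] with z hz hzt
    exact hz.resolve_right hzt
  exact (convex_Icc a b).integral_mem isClosed_Icc hab
    (Integrable.of_mem_Icc a b aemeasurable_id hab)

theorem MonotoneOn.exists_monotone_extension_Icc {α β : Type*} [LinearOrder α]
    [ConditionallyCompleteLinearOrder β] {f : α → β} {s : Set α} {a b : β} (hab : a ≤ b)
    (hf : MonotoneOn f s) (hfs : MapsTo f s (Icc a b)) :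
    ∃ g : α → β, (∀ x, g x ∈ Icc a b) ∧ Monotone g ∧ EqOn f g s := by
  obtain ⟨g, hg, hfg⟩ := hf.exists_monotone_extension (bddBelow_Icc.mono hfs.image_subset)
    (bddAbove_Icc.mono hfs.image_subset)
  refine ⟨fun x => max a (min b (g x)), fun x => ⟨le_max_left _ _, max_le hab (min_le_left _ _)⟩,
    fun x y hxy => max_le_max le_rfl (min_le_min le_rfl (hg hxy)), fun x hx => ?_⟩
  show f x = max a (min b (g x))
  rw [← hfg hx, min_eq_right (hfs hx).2, max_eq_right (hfs hx).1]

theorem AntitoneOn.exists_antitone_extension_Icc {α β : Type*} [LinearOrder α]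
    [ConditionallyCompleteLinearOrder β] {f : α → β} {s : Set α} {a b : β} (hab : a ≤ b)
    (hf : AntitoneOn f s) (hfs : MapsTo f s (Icc a b)) :
    ∃ g : α → β, (∀ x, g x ∈ Icc a b) ∧ Antitone g ∧ EqOn f g s := by
  obtain ⟨g, hg, hfg⟩ := hf.exists_antitone_extension (bddBelow_Icc.mono hfs.image_subset)
    (bddAbove_Icc.mono hfs.image_subset)
  refine ⟨fun x => max a (min b (g x)), fun x => ⟨le_max_left _ _, max_le hab (min_le_left _ _)⟩,
    fun x y hxy => max_le_max le_rfl (min_le_min le_rfl (hg hxy)), fun x hx => ?_⟩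
  show f x = max a (min b (g x))
  rw [← hfg hx, min_eq_right (hfs hx).2, max_eq_right (hfs hx).1]

theorem countable_of_disjoint_Ioo {ι : Type*} [LinearOrder ι] {A : Set ι} (a b : ι → ℝ)
    (hab : ∀ x ∈ A, a x < b x)
    (hdisj : ∀ x ∈ A, ∀ x' ∈ A, x < x' → Disjoint (Ioo (a x) (b x)) (Ioo (a x') (b x'))) :
    A.Countable := by
  refine PairwiseDisjoint.countable_of_isOpen (s := fun x => Ioo (a x) (b x)) ?_
    (fun _ _ => isOpen_Ioo) fun x hx => nonempty_Ioo.2 (hab x hx)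
  intro x hx x' hx' hne
  rcases hne.lt_or_gt with h | h
  exacts [hdisj x hx x' hx' h, (hdisj x' hx' x hx h).symm]

def IsLeftMonotoneSet (Γ : Set (ℝ × ℝ)) : Prop :=
  ∀ x x' zm zp z' : ℝ, (x, zm) ∈ Γ → (x, zp) ∈ Γ → (x', z') ∈ Γ → zm < zp → x < x' →
    z' ∉ Ioo zm zp

theorem LeftMonotone.isLeftMonotoneSet_support {π : Measure (ℝ × ℝ)} (h : LeftMonotone π) :
    IsLeftMonotoneSet π.support := by
  rwa [LeftMonotone, msupport_eq_support] at h

section LeftMonotoneSet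

variable {Γ : Set (ℝ × ℝ)} {x x' z w z' : ℝ}

theorem IsLeftMonotoneSet.le_lower (hΓ : IsLeftMonotoneSet Γ) (hz : (x, z) ∈ Γ)
    (hw : (x, w) ∈ Γ) (hz' : (x', z') ∈ Γ) (hx : x < x') (hzw : z < w) (hz'w : z' < w) :
    z' ≤ z :=
  not_lt.1 fun h => hΓ x x' z w z' hz hw hz' hzw hx ⟨h, hz'w⟩

theorem IsLeftMonotoneSet.upper_le (hΓ : IsLeftMonotoneSet Γ) (hz : (x, z) ∈ Γ)
    (hw : (x, w) ∈ Γ) (hz' : (x', z') ∈ Γ) (hx : x < x') (hzw : z < w) (hzz' : z < z') :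
    w ≤ z' :=
  not_lt.1 fun h => hΓ x x' z w z' hz hw hz' hzw hx ⟨hzz', h⟩

theorem IsLeftMonotoneSet.countable_nontrivial_Iio (hΓ : IsLeftMonotoneSet Γ) (c : ℝ) :
    {x | (Prod.mk x ⁻¹' Γ ∩ Iio c).Nontrivial ∧ (Prod.mk x ⁻¹' Γ ∩ Ioi c).Nonempty}.Countable := by
  have hpair : ∀ x ∈ {x | (Prod.mk x ⁻¹' Γ ∩ Iio c).Nontrivial ∧
      (Prod.mk x ⁻¹' Γ ∩ Ioi c).Nonempty}, ∃ a b, a < b ∧ b < c ∧ (x, a) ∈ Γ ∧ (x, b) ∈ Γ := by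
    rintro x ⟨⟨a, ⟨ha, hac⟩, b, ⟨hb, hbc⟩, hab⟩, -⟩
    rcases hab.lt_or_gt with h | h
    exacts [⟨a, b, h, hbc, ha, hb⟩, ⟨b, a, h, hac, hb, ha⟩]
  choose! a b hab hbc ha hb using hpair
  refine countable_of_disjoint_Ioo a b hab fun x hx x' hx' hxx' => ?_
  obtain ⟨w, hw, hcw⟩ := hx.2
  have := hΓ.le_lower (ha x hx) hw (hb x' hx') hxx' ((hab x hx).trans ((hbc x hx).trans hcw))
    ((hbc x' hx').trans hcw)
  exact disjoint_left.2 fun z hz hz' => (hz.1.trans hz'.2).not_ge this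

theorem IsLeftMonotoneSet.countable_nontrivial_Ioi (hΓ : IsLeftMonotoneSet Γ) (c : ℝ) :
    {x | (Prod.mk x ⁻¹' Γ ∩ Iio c).Nonempty ∧ (Prod.mk x ⁻¹' Γ ∩ Ioi c).Nontrivial}.Countable := by
  have hpair : ∀ x ∈ {x | (Prod.mk x ⁻¹' Γ ∩ Iio c).Nonempty ∧
      (Prod.mk x ⁻¹' Γ ∩ Ioi c).Nontrivial}, ∃ a b, a < b ∧ c < a ∧ (x, a) ∈ Γ ∧ (x, b) ∈ Γ := by
    rintro x ⟨-, ⟨a, ⟨ha, hac⟩, b, ⟨hb, hbc⟩, hab⟩⟩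
    rcases hab.lt_or_gt with h | h
    exacts [⟨a, b, h, hac, ha, hb⟩, ⟨b, a, h, hbc, hb, ha⟩]
  choose! a b hab hca ha hb using hpair
  refine countable_of_disjoint_Ioo a b hab fun x hx x' hx' hxx' => ?_
  obtain ⟨z, hz, hzc⟩ := hx.1
  have := hΓ.upper_le hz (hb x hx) (ha x' hx') hxx' (hzc.trans ((hca x hx).trans (hab x hx)))
    (hzc.trans (hca x' hx'))
  exact disjoint_left.2 fun v hv hv' => (hv'.1.trans hv.2).not_ge this

theorem IsLeftMonotoneSet.antitoneOn_of_lt_of_lt (hΓ : IsLeftMonotoneSet Γ) {G : Set ℝ}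
    {Tm Tp : ℝ → ℝ} {c : ℝ} (hm : ∀ x ∈ G, (x, Tm x) ∈ Γ ∧ Tm x < c)
    (hp : ∀ x ∈ G, (x, Tp x) ∈ Γ ∧ c < Tp x) : AntitoneOn Tm G := by
  intro x hx x' hx' hxx'
  rcases hxx'.eq_or_lt with rfl | hlt
  · exact le_rfl
  exact hΓ.le_lower (hm x hx).1 (hp x hx).1 (hm x' hx').1 hlt
    ((hm x hx).2.trans (hp x hx).2) ((hm x' hx').2.trans (hp x hx).2)

theorem IsLeftMonotoneSet.monotoneOn_of_lt_of_lt (hΓ : IsLeftMonotoneSet Γ) {G : Set ℝ}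
    {Tm Tp : ℝ → ℝ} {c : ℝ} (hm : ∀ x ∈ G, (x, Tm x) ∈ Γ ∧ Tm x < c)
    (hp : ∀ x ∈ G, (x, Tp x) ∈ Γ ∧ c < Tp x) : MonotoneOn Tp G := by
  intro x hx x' hx' hxx'
  rcases hxx'.eq_or_lt with rfl | hlt
  · exact le_rfl
  exact hΓ.upper_le (hm x hx).1 (hp x hx).1 (hp x' hx').1 hlt
    ((hm x hx).2.trans (hp x hx).2) ((hm x hx).2.trans (hp x' hx').2)

end LeftMonotoneSet

theorem ae_support_subset_preimage_support_compProd {α β : Type*} [MeasurableSpace α]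
    [MeasurableSpace β] [TopologicalSpace α] [TopologicalSpace β]
    [HereditarilyLindelofSpace (α × β)] (μ : Measure α) [SFinite μ] (κ : Kernel α β)
    [IsSFiniteKernel κ] :
    ∀ᵐ x ∂μ, (κ x).support ⊆ Prod.mk x ⁻¹' (μ ⊗ₘ κ).support := by
  filter_upwards [Measure.ae_ae_of_ae_compProd (Measure.support_mem_ae (μ := μ ⊗ₘ κ))] with x hx
  exact Measure.support_subset_of_isClosed
    (Measure.isClosed_support.preimage (Continuous.prodMk_right x)) hx

theorem exists_eq_smul_dirac_add_smul_dirac {ν : Measure ℝ} [IsProbabilityMeasure ν]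
    {S : Set ℝ} {zml zmu zpl zpu y : ℝ} (hZ : ∀ᵐ z ∂ν, z ∈ Icc zml zmu ∪ Icc zpl zpu)
    (hbar : ∫ z, z ∂ν = y) (hy₁ : zmu < y) (hy₂ : y < zpl) (hS : ν.support ⊆ S)
    (hm : ¬((S ∩ Iio y).Nontrivial ∧ (S ∩ Ioi y).Nonempty))
    (hp : ¬((S ∩ Iio y).Nonempty ∧ (S ∩ Ioi y).Nontrivial)) :
    ∃ a b, a ∈ Icc zml zmu ∧ b ∈ Icc zpl zpu ∧ a ∈ S ∧ b ∈ S ∧ 0 < ν {a} ∧ 0 < ν {b} ∧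
      ν = ν {a} • Measure.dirac a + ν {b} • Measure.dirac b := by
  obtain ⟨a, ha, has⟩ := Measure.nonempty_inter_support_of_pos <|
    measure_pos_of_integral_notMem_Icc (t := Icc zml zmu) (by simpa only [union_comm] using hZ)
      (by rw [hbar]; exact fun h => hy₂.not_ge h.1)
  obtain ⟨b, hb, hbs⟩ := Measure.nonempty_inter_support_of_pos <|
    measure_pos_of_integral_notMem_Icc hZ (by rw [hbar]; exact fun h => hy₁.not_ge h.2)
  have hay : a < y := ha.2.trans_lt hy₁
  have hyb : y < b := hy₂.trans_le hb.1
  have hSm : (S ∩ Iio y).Subsingleton := not_nontrivial_iff.1 fun h => hm ⟨h, b, hS hbs, hyb⟩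
  have hSp : (S ∩ Ioi y).Subsingleton := not_nontrivial_iff.1 fun h => hp ⟨⟨a, hS has, hay⟩, h⟩
  have hsupp : ν.support ⊆ {a, b} := by
    intro z hz
    rcases Measure.support_subset_of_isClosed (isClosed_Icc.union isClosed_Icc) hZ hz
      with hzm | hzp
    · exact Or.inl (hSm ⟨hS hz, hzm.2.trans_lt hy₁⟩ ⟨hS has, hay⟩)
    · exact Or.inr (hSp ⟨hS hz, hy₂.trans_le hzp.1⟩ ⟨hS hbs, hyb⟩)
  have hab : a ≠ b := (hay.trans hyb).ne
  exact ⟨a, b, ha, hb, hS has, hS hbs, measure_singleton_pos_of_support_subset has hsupp hab,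
    measure_singleton_pos_of_support_subset hbs (pair_comm a b ▸ hsupp) hab.symm,
    eq_smul_dirac_add_smul_dirac_of_support_subset hab hsupp⟩

theorem ae_exists_smul_dirac_add_smul_dirac {σX σZ : Measure ℝ} [IsFiniteMeasure σX]
    [NullSingletonClass σX] {κ : Kernel ℝ ℝ} [IsMarkovKernel κ] {zml zmu zpl zpu y : ℝ}
    (hy₁ : zmu < y) (hy₂ : y < zpl) (hσZ : σZ (Icc zml zmu ∪ Icc zpl zpu)ᶜ = 0)
    (hπ : MemPiBar (fun _ => y) σX σZ (σX ⊗ₘ κ)) (hlm : LeftMonotone (σX ⊗ₘ κ)) :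
    ∀ᵐ x ∂σX, ∃ a b, a ∈ Icc zml zmu ∧ b ∈ Icc zpl zpu ∧ (x, a) ∈ (σX ⊗ₘ κ).support ∧
      (x, b) ∈ (σX ⊗ₘ κ).support ∧ 0 < κ x {a} ∧ 0 < κ x {b} ∧
      κ x = κ x {a} • Measure.dirac a + κ x {b} • Measure.dirac b := by
  obtain ⟨hsnd, κ', hκ', hκκ', hbar⟩ := hπ
  have hΓ := hlm.isLeftMonotoneSet_support
  have hbarκ : ∀ᵐ x ∂σX, ∫ z, z ∂κ x = y := by
    filter_upwards [Kernel.ae_eq_of_compProd_eq hκκ', hbar] with x hκx hx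
    rwa [hκx]
  have hZ : ∀ᵐ x ∂σX, ∀ᵐ z ∂κ x, z ∈ Icc zml zmu ∪ Icc zpl zpu := by
    refine Measure.ae_ae_of_ae_compProd (p := fun q => q.2 ∈ _)
      (ae_of_ae_map measurable_snd.aemeasurable ?_)
    rw [hsnd]
    exact ae_iff.2 hσZ
  have hsplit :=
    ((hΓ.countable_nontrivial_Iio y).union (hΓ.countable_nontrivial_Ioi y)).ae_notMem σX
  filter_upwards [hbarκ, hZ, ae_support_subset_preimage_support_compProd σX κ, hsplit]
    with x hbarx hZx hsx hx
  rw [mem_union, not_or] at hx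
  exact exists_eq_smul_dirac_add_smul_dirac hZx hbarx hy₁ hy₂ hsx hx.1 hx.2

theorem two_point_conditional_structure_general
    (xlo xhi zml zmu zpl zpu y : ℝ)
    (hzm : zml ≤ zmu) (hzp : zpl ≤ zpu)
    (hsep₁ : zmu < y) (hsep₂ : y < zpl)
    (σX σZ : Measure ℝ) [IsProbabilityMeasure σX]
    (hσZ : σZ (Set.Icc zml zmu ∪ Set.Icc zpl zpu)ᶜ = 0)
    (hna : ∀ x : ℝ, σX {x} = 0)
    (π : Measure (ℝ × ℝ)) (κ : Kernel ℝ ℝ) (hκ : IsMarkovKernel κ)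
    (hπκ : π = σX ⊗ₘ κ)
    (hπ : MemPiBar (fun _ => y) σX σZ π)
    (hlm : LeftMonotone π) :
    ∃ Tm Tp αm αp : ℝ → ℝ,
      (∀ x ∈ Set.Icc xlo xhi, Tm x ∈ Set.Icc zml zmu) ∧
      (∀ x ∈ Set.Icc xlo xhi, Tp x ∈ Set.Icc zpl zpu) ∧
      AntitoneOn Tm (Set.Icc xlo xhi) ∧
      MonotoneOn Tp (Set.Icc xlo xhi) ∧
      ∀ᵐ x ∂σX, 0 < αm x ∧ 0 < αp x ∧ αm x + αp x = 1 ∧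
        κ x = ENNReal.ofReal (αm x) • Measure.dirac (Tm x) +
              ENNReal.ofReal (αp x) • Measure.dirac (Tp x) := by
  subst hπκ
  have : NullSingletonClass σX := ⟨hna⟩
  obtain ⟨G, hGae, hG⟩ := eventually_iff_exists_mem.1 <|
    ae_exists_smul_dirac_add_smul_dirac hsep₁ hsep₂ hσZ hπ hlm
  choose! Tm₀ Tp₀ hT using hG
  have hΓ := hlm.isLeftMonotoneSet_support
  have hΓm : ∀ x ∈ G, (x, Tm₀ x) ∈ (σX ⊗ₘ κ).support ∧ Tm₀ x < y :=
    fun x hx => ⟨(hT x hx).2.2.1, (hT x hx).1.2.trans_lt hsep₁⟩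
  have hΓp : ∀ x ∈ G, (x, Tp₀ x) ∈ (σX ⊗ₘ κ).support ∧ y < Tp₀ x :=
    fun x hx => ⟨(hT x hx).2.2.2.1, hsep₂.trans_le (hT x hx).2.1.1⟩
  obtain ⟨Tm, hTm_mem, hTm_anti, hTm_eq⟩ := AntitoneOn.exists_antitone_extension_Icc hzm
    (hΓ.antitoneOn_of_lt_of_lt hΓm hΓp) fun x hx => (hT x hx).1
  obtain ⟨Tp, hTp_mem, hTp_mono, hTp_eq⟩ := MonotoneOn.exists_monotone_extension_Icc hzp
    (hΓ.monotoneOn_of_lt_of_lt hΓm hΓp) fun x hx => (hT x hx).2.1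
  refine ⟨Tm, Tp, fun x => (κ x {Tm x}).toReal, fun x => (κ x {Tp x}).toReal,
    fun x _ => hTm_mem x, fun x _ => hTp_mem x, hTm_anti.antitoneOn _, hTp_mono.monotoneOn _, ?_⟩
  filter_upwards [hGae] with x hx
  obtain ⟨-, -, -, -, ha, hb, hκx⟩ := hT x hx
  rw [← hTm_eq hx, ← hTp_eq hx]
  exact toReal_weights_of_eq_smul_dirac_add_smul_dirac ha hb hκx

/-- **Two-point conditional structure of left-monotone couplings with constant barycenter.**
If `σX` is non-atomic on a compact interval `X`, `σZ` lives on the union of two intervals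
`Z₋ ∪ Z₊` separated by its barycenter `y`, and `π = σX ⊗ κ ∈ Π̄(F, σX, σZ)` (with `F ≡ y`) is
left-monotone, then for `σX`-a.e. `x` the conditional `κ x` is supported on exactly two points
`T₋ x ∈ Z₋` and `T₊ x ∈ Z₊`, with `T₋` decreasing and `T₊` increasing on `X`. -/
theorem two_point_conditional_structure
    (xlo xhi zml zmu zpl zpu y : ℝ)
    (hx : xlo ≤ xhi) (hzm : zml ≤ zmu) (hzp : zpl ≤ zpu)
    (hsep₁ : zmu < y) (hsep₂ : y < zpl)
    (σX σZ : Measure ℝ) [IsProbabilityMeasure σX] [IsProbabilityMeasure σZ]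
    (hσX : σX (Set.Icc xlo xhi)ᶜ = 0)
    (hσZ : σZ (Set.Icc zml zmu ∪ Set.Icc zpl zpu)ᶜ = 0)
    (hna : ∀ x : ℝ, σX {x} = 0)
    (hbar : y = ∫ z, z ∂σZ)
    (π : Measure (ℝ × ℝ)) (κ : Kernel ℝ ℝ) (hκ : IsMarkovKernel κ)
    (hπκ : π = σX ⊗ₘ κ)
    (hπ : MemPiBar (fun _ => y) σX σZ π)
    (hlm : LeftMonotone π) :
    ∃ Tm Tp αm αp : ℝ → ℝ,
      (∀ x ∈ Set.Icc xlo xhi, Tm x ∈ Set.Icc zml zmu) ∧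
      (∀ x ∈ Set.Icc xlo xhi, Tp x ∈ Set.Icc zpl zpu) ∧
      AntitoneOn Tm (Set.Icc xlo xhi) ∧
      MonotoneOn Tp (Set.Icc xlo xhi) ∧
      ∀ᵐ x ∂σX, 0 < αm x ∧ 0 < αp x ∧ αm x + αp x = 1 ∧
        κ x = ENNReal.ofReal (αm x) • Measure.dirac (Tm x) +
              ENNReal.ofReal (αp x) • Measure.dirac (Tp x) :=
  two_point_conditional_structure_general xlo xhi zml zmu zpl zpu y hzm hzp hsep₁ hsep₂ σX σZ hσZ
    hna π κ hκ hπκ hπ hlm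

end MOT
end
end

section
/- Uniqueness of a constant-barycenter coupling concentrated on two graphs: Let σ_X be a probability measure on a compact X ⊂ ℝ and σ_Z a probability measure on a compact Z ⊂ ℝ with barycenter y = ∫ z dσ_Z, and let F be the constant function F(x) = y. Let T₋, T₊ : X → ℝ be measurable maps with T₋(x) < y < T₊(x) for σ_X-a.e. x. Then there is at most one coupling π ∈ Π̄(F, σ_X, σ_Z) concentrated on the union of the graphs of T₋ and T₊; any such π equals σ_X ⊗ κ with κ(x, ·) = λ₋(x) δ_{T₋(x)} + λ₊(x) δ_{T₊(x)}, where the weights are uniquely determined as λ₋(x) = (T₊(x) − y)/(T₊(x) − T₋(x)) and λ₊(x) = (y − T₋(x))/(T₊(x) − T₋(x)). -/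
open MeasureTheory ProbabilityTheory Filter Topology ENNReal

noncomputable section

namespace MOT

lemma integrable_id_dirac (a : ℝ) : Integrable (fun z : ℝ => z) (Measure.dirac a) := by
  have h : (fun _ : ℝ => a) =ᵐ[Measure.dirac a] fun z => z := by
    rw [Filter.EventuallyEq, MeasureTheory.ae_dirac_eq]
    exact Filter.eventually_pure.2 rfl
  exact (integrable_const a).congr h

/-- A probability measure on ℝ concentrated on two points `a < y < b` with mean `y` is the
unique convex combination of diracs with those weights. -/
lemma two_point_eq (μ : Measure ℝ) [IsProbabilityMeasure μ] {a b y : ℝ}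
    (hay : a < y) (hyb : y < b)
    (hnull : μ (({a, b} : Set ℝ)ᶜ) = 0) (hmean : ∫ z, z ∂μ = y) :
    μ = ENNReal.ofReal ((b - y) / (b - a)) • Measure.dirac a +
        ENNReal.ofReal ((y - a) / (b - a)) • Measure.dirac b := by
  classical
  have hab : a ≠ b := (hay.trans hyb).ne
  have hmab : MeasurableSet ({a, b} : Set ℝ) :=
    (measurableSet_singleton a).union (measurableSet_singleton b)
  have hdisj : Disjoint ({a} : Set ℝ) {b} := Set.disjoint_singleton.2 hab
  have hunion : ({a, b} : Set ℝ) = {a} ∪ {b} := rfl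
  set p := μ {a} with hp
  set q := μ {b} with hq
  have hdecomp : μ = p • Measure.dirac a + q • Measure.dirac b := by
    ext s hs
    have h0 : μ (s ∩ ({a, b} : Set ℝ)ᶜ) = 0 :=
      measure_mono_null Set.inter_subset_right hnull
    have h1 : μ s = μ (s ∩ {a, b}) := by
      have := measure_inter_add_diff (μ := μ) s hmab
      rw [Set.diff_eq, h0, add_zero] at this
      exact this.symm
    have h2 : s ∩ ({a, b} : Set ℝ) = (s ∩ {a}) ∪ (s ∩ {b}) := by
      rw [hunion, Set.inter_union_distrib_left]
    have hsa : μ (s ∩ {a}) = if a ∈ s then p else 0 := by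
      by_cases ha : a ∈ s
      · rw [Set.inter_eq_self_of_subset_right (Set.singleton_subset_iff.2 ha)]
        simp [ha, hp]
      · rw [Set.inter_singleton_eq_empty.2 ha]
        simp [ha]
    have hsb : μ (s ∩ {b}) = if b ∈ s then q else 0 := by
      by_cases hb : b ∈ s
      · rw [Set.inter_eq_self_of_subset_right (Set.singleton_subset_iff.2 hb)]
        simp [hb, hq]
      · rw [Set.inter_singleton_eq_empty.2 hb]
        simp [hb]
    have hdisj' : Disjoint (s ∩ ({a} : Set ℝ)) (s ∩ {b}) :=
      hdisj.mono Set.inter_subset_right Set.inter_subset_right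
    rw [h1, h2, measure_union hdisj' (hs.inter (measurableSet_singleton b)), hsa, hsb]
    simp only [Measure.add_apply, Measure.smul_apply, smul_eq_mul,
      Measure.dirac_apply' _ hs, Set.indicator]
    by_cases ha : a ∈ s <;> by_cases hb : b ∈ s <;> simp [ha, hb]
  have hpq : p + q = 1 := by
    have hcompl : μ ({a, b} : Set ℝ) + μ (({a, b} : Set ℝ)ᶜ) = μ Set.univ :=
      measure_add_measure_compl hmab
    rw [hnull, add_zero, measure_univ] at hcompl
    rw [hp, hq, ← measure_union hdisj (measurableSet_singleton b), ← hunion, hcompl]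
  have hp_ne : p ≠ ∞ := by
    intro h; rw [h] at hpq; simp at hpq
  have hq_ne : q ≠ ∞ := by
    intro h; rw [h] at hpq; simp [add_comm] at hpq
  have hmean' : p.toReal * a + q.toReal * b = y := by
    rw [hdecomp] at hmean
    rw [integral_add_measure ((integrable_id_dirac a).smul_measure hp_ne)
        ((integrable_id_dirac b).smul_measure hq_ne),
      integral_smul_measure, integral_smul_measure, integral_dirac, integral_dirac] at hmean
    simpa [smul_eq_mul] using hmean
  have hsum : p.toReal + q.toReal = 1 := by
    rw [← ENNReal.toReal_add hp_ne hq_ne, hpq, ENNReal.toReal_one]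
  have hba : (0:ℝ) < b - a := sub_pos.2 (hay.trans hyb)
  have hpval : p.toReal = (b - y) / (b - a) := by
    rw [eq_div_iff hba.ne']
    linear_combination b * hsum - hmean'
  have hqval : q.toReal = (y - a) / (b - a) := by
    rw [eq_div_iff hba.ne']
    linear_combination hmean' - a * hsum
  have hpe : ENNReal.ofReal ((b - y) / (b - a)) = p := by
    rw [← hpval, ENNReal.ofReal_toReal hp_ne]
  have hqe : ENNReal.ofReal ((y - a) / (b - a)) = q := by
    rw [← hqval, ENNReal.ofReal_toReal hq_ne]
  rw [hpe, hqe]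
  exact hdecomp

/-- **Uniqueness of a constant-barycenter coupling concentrated on two graphs.** If
`T₋ x < y < T₊ x` for `σX`-a.e. `x` (with `y` the barycenter of `σZ`), then there is at most
one coupling in `Π̄(F, σX, σZ)` (with `F ≡ y`) concentrated on the union of the graphs of
`T₋, T₊`; moreover the conditional weights of any such coupling are uniquely determined as
`λ₋ x = (T₊ x − y)/(T₊ x − T₋ x)` and `λ₊ x = (y − T₋ x)/(T₊ x − T₋ x)`. -/
theorem two_graph_coupling_unique
    (X Z : Set ℝ) (hX : IsCompact X) (hZ : IsCompact Z)
    (σX σZ : Measure ℝ) [IsProbabilityMeasure σX] [IsProbabilityMeasure σZ]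
    (hσX : σX Xᶜ = 0) (hσZ : σZ Zᶜ = 0)
    (y : ℝ) (hbar : y = ∫ z, z ∂σZ)
    (Tm Tp : ℝ → ℝ) (hTm : Measurable Tm) (hTp : Measurable Tp)
    (hsep : ∀ᵐ x ∂σX, Tm x < y ∧ y < Tp x) :
    (∀ π₁ π₂ : Measure (ℝ × ℝ),
      MemPiBar (fun _ => y) σX σZ π₁ →
      π₁ {p : ℝ × ℝ | p.2 = Tm p.1 ∨ p.2 = Tp p.1}ᶜ = 0 →
      MemPiBar (fun _ => y) σX σZ π₂ →
      π₂ {p : ℝ × ℝ | p.2 = Tm p.1 ∨ p.2 = Tp p.1}ᶜ = 0 →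
      π₁ = π₂) ∧
    (∀ π : Measure (ℝ × ℝ),
      MemPiBar (fun _ => y) σX σZ π →
      π {p : ℝ × ℝ | p.2 = Tm p.1 ∨ p.2 = Tp p.1}ᶜ = 0 →
      ∀ κ : Kernel ℝ ℝ, IsMarkovKernel κ → π = σX ⊗ₘ κ →
        ∀ᵐ x ∂σX,
          κ x = ENNReal.ofReal ((Tp x - y) / (Tp x - Tm x)) • Measure.dirac (Tm x) +
                ENNReal.ofReal ((y - Tm x) / (Tp x - Tm x)) • Measure.dirac (Tp x)) := by
  have key : ∀ π : Measure (ℝ × ℝ),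
      MemPiBar (fun _ => y) σX σZ π →
      π {p : ℝ × ℝ | p.2 = Tm p.1 ∨ p.2 = Tp p.1}ᶜ = 0 →
      ∀ κ : Kernel ℝ ℝ, IsMarkovKernel κ → π = σX ⊗ₘ κ →
        ∀ᵐ x ∂σX,
          κ x = ENNReal.ofReal ((Tp x - y) / (Tp x - Tm x)) • Measure.dirac (Tm x) +
                ENNReal.ofReal ((y - Tm x) / (Tp x - Tm x)) • Measure.dirac (Tp x) := by
    intro π hmem hnull κ hκinst hπ
    obtain ⟨-, κ', hκ'inst, hπ', hmean'⟩ := hmem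
    haveI : IsProbabilityMeasure π := by rw [hπ]; infer_instance
    have hfst : π.fst = σX := by rw [hπ, Measure.fst_compProd]
    have h1 := eq_condKernel_of_measure_eq_compProd κ (by rw [hfst]; exact hπ)
    have h2 := eq_condKernel_of_measure_eq_compProd κ' (by rw [hfst]; exact hπ')
    rw [hfst] at h1 h2
    have hmean : ∀ᵐ x ∂σX, ∫ z, z ∂(κ x) = y := by
      filter_upwards [h1, h2, hmean'] with x e1 e2 e3
      rw [e1, ← e2]; exact e3
    have hae : ∀ᵐ p ∂π, p.2 = Tm p.1 ∨ p.2 = Tp p.1 := by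
      rw [ae_iff]; exact hnull
    rw [hπ] at hae
    have hslice := Measure.ae_ae_of_ae_compProd hae
    filter_upwards [hmean, hslice, hsep] with x hmx hsx hsepx
    have hnull2 : κ x (({Tm x, Tp x} : Set ℝ)ᶜ) = 0 := by
      have : {z : ℝ | ¬ (z = Tm x ∨ z = Tp x)} = ({Tm x, Tp x} : Set ℝ)ᶜ := by
        ext z; simp [not_or]
      rw [← this]
      exact hsx
    exact two_point_eq (κ x) hsepx.1 hsepx.2 hnull2 hmx
  refine ⟨?_, key⟩
  intro π₁ π₂ h₁ hn₁ h₂ hn₂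
  obtain ⟨-, κ₁, hκ₁, hπ₁, -⟩ := id h₁
  obtain ⟨-, κ₂, hκ₂, hπ₂, -⟩ := id h₂
  have e₁ := key π₁ h₁ hn₁ κ₁ hκ₁ hπ₁
  have e₂ := key π₂ h₂ hn₂ κ₂ hκ₂ hπ₂
  have hκκ : κ₁ =ᵐ[σX] κ₂ := by
    filter_upwards [e₁, e₂] with x f1 f2
    rw [f1, f2]
  rw [hπ₁, hπ₂]
  exact Measure.compProd_congr hκκ

end MOT
end
end
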